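/- arXiv:0711.1460 — 2 statements merged into one kernel-verified Lean document; each statement's English description precedes it below -/
import Mathlib

section
/- Under the hypotheses of the de Bruijn identity for arbitrary symmetric perturbations, the density f_δ of P + √δ Q satisfies the heat-equation initial condition: ∂f_δ(y)/∂δ |_{δ=0} = (1/2) f_P''(y). -/
open MeasureTheory Filter Topology

/-- Density of `P + √δ Q` when `P`, `Q` are independent with densities `fP`, `fQ`. -/
noncomputable def convPert (fP fQ : ℝ → ℝ) (δ : ℝ) (y : ℝ) : ℝ :=
  ∫ z, fP (y - Real.sqrt δ * z) * fQ z

/-- Each iterated derivative of a `C^⊤` function is differentiable, with derivative the next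
iterated derivative. -/
lemma hasDerivAt_iteratedDeriv_aux (f : ℝ → ℝ) (hf : ContDiff ℝ (⊤ : ℕ∞) f) (n : ℕ) (x : ℝ) :
    HasDerivAt (iteratedDeriv n f) (iteratedDeriv (n + 1) f x) x := by
  have hdiff : Differentiable ℝ (iteratedDeriv n f) := by
    rw [iteratedDeriv_eq_iterate]
    have h : ContDiff ℝ ((⊤ : ℕ∞) : WithTop ℕ∞) (deriv^[n] f) :=
      ContDiff.iterate_deriv n (hf.of_le (by simp))
    exact h.differentiable (by simp)
  rw [iteratedDeriv_succ]
  exact (hdiff x).hasDerivAt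

/-- A function whose derivative is integrable is bounded. -/
lemma bdd_of_deriv_integrable_aux (g g' : ℝ → ℝ) (hg : ∀ x, HasDerivAt g (g' x) x)
    (hint : Integrable g') : ∀ x, |g x| ≤ |g 0| + ∫ t, |g' t| := by
  intro x
  have hftc : ∫ t in (0:ℝ)..x, g' t = g x - g 0 :=
    intervalIntegral.integral_eq_sub_of_hasDerivAt (fun t _ => hg t)
      hint.intervalIntegrable
  have h1 : |g x - g 0| ≤ ∫ t, |g' t| := by
    rw [← hftc]
    calc |(∫ t in (0:ℝ)..x, g' t)| ≤ |(∫ t in (0:ℝ)..x, |g' t|)| := by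
          simpa [Real.norm_eq_abs] using
            intervalIntegral.norm_integral_le_abs_integral_norm
              (f := g') (a := (0:ℝ)) (b := x) (μ := volume)
      _ = |(∫ t in Set.uIoc 0 x, |g' t|)| :=
          intervalIntegral.abs_intervalIntegral_eq _ _ _ _
      _ = ∫ t in Set.uIoc 0 x, |g' t| :=
          abs_of_nonneg (integral_nonneg fun t => abs_nonneg _)
      _ ≤ ∫ t, |g' t| :=
          setIntegral_le_integral hint.abs (Eventually.of_forall fun t => abs_nonneg _)
  have h2 : |g x| ≤ |g 0| + |g x - g 0| := by
    have := abs_add_le (g 0) (g x - g 0)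
    simpa using this
  linarith

/-- Second-order Taylor estimate with uniformly bounded third derivative. -/
lemma taylor_bd_aux (f : ℝ → ℝ) (hf : ContDiff ℝ (⊤ : ℕ∞) f) (M : ℝ)
    (hM : ∀ x, |iteratedDeriv 3 f x| ≤ M) (a h : ℝ) :
    |f (a + h) - f a - h * deriv f a - h ^ 2 / 2 * iteratedDeriv 2 f a| ≤ M * |h| ^ 3 := by
  have hM0 : 0 ≤ M := (abs_nonneg _).trans (hM 0)
  have hd : ∀ (n : ℕ) (x : ℝ), HasDerivAt (iteratedDeriv n f) (iteratedDeriv (n + 1) f x) x :=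
    fun n x => hasDerivAt_iteratedDeriv_aux f hf n x
  -- Step 1 : f'' is M-Lipschitz
  have step1 : ∀ x : ℝ, |iteratedDeriv 2 f x - iteratedDeriv 2 f a| ≤ M * |x - a| := by
    intro x
    have := Convex.norm_image_sub_le_of_norm_hasDerivWithin_le
      (f := iteratedDeriv 2 f) (f' := iteratedDeriv 3 f) (s := Set.univ) (C := M)
      (fun u _ => (hd 2 u).hasDerivWithinAt)
      (fun u _ => by simpa [Real.norm_eq_abs] using hM u)
      convex_univ (Set.mem_univ a) (Set.mem_univ x)
    simpa [Real.norm_eq_abs] using this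
  set s : Set ℝ := segment ℝ a (a + h) with hs
  have hmem : ∀ x ∈ s, |x - a| ≤ |h| := by
    intro x hx
    rw [hs, segment_eq_image'] at hx
    obtain ⟨θ, hθ, rfl⟩ := hx
    have h1 : |θ| ≤ 1 := by
      rw [abs_of_nonneg hθ.1]; exact hθ.2
    have : a + θ • (a + h - a) - a = θ * h := by simp only [smul_eq_mul]; ring
    rw [this, abs_mul]
    nlinarith [abs_nonneg h, abs_nonneg θ]
  -- g1 : first order remainder of f'
  set g1 : ℝ → ℝ := fun x => deriv f x - deriv f a - (x - a) * iteratedDeriv 2 f a with hg1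
  have hg1d : ∀ x : ℝ, HasDerivAt g1 (iteratedDeriv 2 f x - iteratedDeriv 2 f a) x := by
    intro x
    have h1 : HasDerivAt (deriv f) (iteratedDeriv 2 f x) x := by
      have := hd 1 x
      simpa [iteratedDeriv_one] using this
    have h2 : HasDerivAt (fun x : ℝ => (x - a) * iteratedDeriv 2 f a)
        (iteratedDeriv 2 f a) x := by
      simpa using ((hasDerivAt_id x).sub_const a).mul_const (iteratedDeriv 2 f a)
    exact (h1.sub_const (deriv f a)).sub h2
  have hg1a : g1 a = 0 := by simp [hg1]
  have hg1bd : ∀ x ∈ s, |g1 x| ≤ M * |h| * |h| := by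
    intro x hx
    have hb := Convex.norm_image_sub_le_of_norm_hasDerivWithin_le
      (f := g1) (f' := fun x => iteratedDeriv 2 f x - iteratedDeriv 2 f a) (s := s)
      (C := M * |h|)
      (fun u _ => (hg1d u).hasDerivWithinAt)
      (fun u hu => by
        have h1 := step1 u
        have h2 := hmem u hu
        simp only [Real.norm_eq_abs]
        nlinarith [abs_nonneg (u - a)])
      (convex_segment a (a + h)) (left_mem_segment ℝ a (a + h)) hx
    rw [hg1a, sub_zero, Real.norm_eq_abs, Real.norm_eq_abs] at hb
    have h2 := hmem x hx
    have h3 : M * |h| * |x - a| ≤ M * |h| * |h| :=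
      mul_le_mul_of_nonneg_left h2 (mul_nonneg hM0 (abs_nonneg h))
    linarith
  -- g2 : second order remainder of f
  set g2 : ℝ → ℝ := fun x =>
    f x - f a - (x - a) * deriv f a - (x - a) ^ 2 / 2 * iteratedDeriv 2 f a with hg2
  have hg2d : ∀ x : ℝ, HasDerivAt g2 (g1 x) x := by
    intro x
    have h0 : HasDerivAt f (deriv f x) x := by
      have := hd 0 x
      simpa [iteratedDeriv_one] using this
    have hl : HasDerivAt (fun x : ℝ => (x - a) * deriv f a) (deriv f a) x := by
      simpa using ((hasDerivAt_id x).sub_const a).mul_const (deriv f a)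
    have hqsq : HasDerivAt (fun x : ℝ => (x - a) ^ 2) (2 * (x - a)) x := by
      have := ((hasDerivAt_id x).sub_const a).pow 2
      simp at this
      exact this
    have hq : HasDerivAt (fun x : ℝ => (x - a) ^ 2 / 2 * iteratedDeriv 2 f a)
        ((x - a) * iteratedDeriv 2 f a) x := by
      have := (hqsq.div_const 2).mul_const (iteratedDeriv 2 f a)
      rw [show (x - a) * iteratedDeriv 2 f a = 2 * (x - a) / 2 * iteratedDeriv 2 f a by ring]
      exact this
    have := ((h0.sub_const (f a)).sub hl).sub hq
    exact this
  have hg2a : g2 a = 0 := by simp [hg2]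
  have hb := Convex.norm_image_sub_le_of_norm_hasDerivWithin_le
    (f := g2) (f' := g1) (s := s) (C := M * |h| * |h|)
    (fun u _ => (hg2d u).hasDerivWithinAt)
    (fun u hu => by simpa [Real.norm_eq_abs] using hg1bd u hu)
    (convex_segment a (a + h)) (left_mem_segment ℝ a (a + h)) (right_mem_segment ℝ a (a + h))
  rw [hg2a, sub_zero, Real.norm_eq_abs, Real.norm_eq_abs] at hb
  have hg2v : g2 (a + h) = f (a + h) - f a - h * deriv f a - h ^ 2 / 2 * iteratedDeriv 2 f a := by
    simp [hg2]
  rw [hg2v] at hb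
  have : a + h - a = h := by ring
  rw [this] at hb
  calc |f (a + h) - f a - h * deriv f a - h ^ 2 / 2 * iteratedDeriv 2 f a|
      ≤ M * |h| * |h| * |h| := hb
    _ = M * |h| ^ 3 := by ring

theorem stmt9 (fP fQ : ℝ → ℝ)
    (hPsmooth : ContDiff ℝ (⊤ : ℕ∞) fP) (hPpos : ∀ y, 0 ≤ fP y)
    (hPdens : ∫ y, fP y = 1)
    (hPderivInt : ∀ n : ℕ, Integrable (iteratedDeriv n fP))
    (hQpos : ∀ y, 0 ≤ fQ y) (hQdens : ∫ y, fQ y = 1)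
    (hQsymm : ∀ y, fQ y = fQ (-y))
    (hQmean : ∫ y, y * fQ y = 0)
    (hQvar : ∫ y, y ^ 2 * fQ y = 1)
    (hQmoments : ∀ n : ℕ, Integrable (fun y => y ^ n * fQ y)) :
    ∀ y : ℝ, HasDerivWithinAt (fun δ => convPert fP fQ δ y)
      ((1 / 2) * iteratedDeriv 2 fP y) (Set.Ici 0) 0 := by
  intro y
  -- basic integrability facts for fQ
  have hQint : Integrable fQ := by
    have := hQmoments 0
    simpa using this
  have hQ1 : Integrable (fun z => z * fQ z) := by
    have := hQmoments 1
    simpa using this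
  have hQ2 : Integrable (fun z => z ^ 2 * fQ z) := hQmoments 2
  have hQ3abs : Integrable (fun z => |z| ^ 3 * fQ z) := by
    refine ((hQmoments 3).abs).congr (Eventually.of_forall fun z => ?_)
    simp [abs_mul, abs_pow, abs_of_nonneg (hQpos z)]
  -- bound on fP
  have hderivInt : Integrable (deriv fP) := by
    rw [← iteratedDeriv_one]; exact hPderivInt 1
  set B : ℝ := |fP 0| + ∫ t, |deriv fP t| with hB
  have hBfP : ∀ x, |fP x| ≤ B := by
    refine bdd_of_deriv_integrable_aux fP (deriv fP) (fun x => ?_) hderivInt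
    have := hasDerivAt_iteratedDeriv_aux fP hPsmooth 0 x
    simpa [iteratedDeriv_one] using this
  -- bound on third derivative
  set M : ℝ := |iteratedDeriv 3 fP 0| + ∫ t, |iteratedDeriv 4 fP t| with hMdef
  have hM : ∀ x, |iteratedDeriv 3 fP x| ≤ M := by
    refine bdd_of_deriv_integrable_aux (iteratedDeriv 3 fP) (iteratedDeriv 4 fP)
      (fun x => hasDerivAt_iteratedDeriv_aux fP hPsmooth 3 x) (hPderivInt 4)
  have hM0 : 0 ≤ M := (abs_nonneg _).trans (hM 0)
  set C3 : ℝ := ∫ z, |z| ^ 3 * fQ z with hC3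
  have hC30 : 0 ≤ C3 := integral_nonneg fun z => mul_nonneg (by positivity) (hQpos z)
  set K : ℝ := M * C3 with hK
  have hK0 : 0 ≤ K := mul_nonneg hM0 hC30
  -- the key quantitative estimate
  have key : ∀ δ : ℝ, 0 ≤ δ →
      |convPert fP fQ δ y - fP y - δ * ((1 / 2) * iteratedDeriv 2 fP y)| ≤
        K * (δ * Real.sqrt δ) := by
    intro δ hδ
    have hs0 : (0:ℝ) ≤ Real.sqrt δ := Real.sqrt_nonneg δ
    have hs2 : Real.sqrt δ ^ 2 = δ := Real.sq_sqrt hδ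
    have hmeas : AEStronglyMeasurable (fun z : ℝ => fP (y - Real.sqrt δ * z)) volume := by
      exact (hPsmooth.continuous.comp
        (continuous_const.sub (continuous_const.mul continuous_id))).aestronglyMeasurable
    have hI0 : Integrable (fun z => fP (y - Real.sqrt δ * z) * fQ z) :=
      hQint.bdd_mul hmeas (c := B) (Eventually.of_forall fun z => by simpa [Real.norm_eq_abs] using hBfP _)
    have hIa : Integrable (fun z => fP y * fQ z) := hQint.const_mul _
    have hIb : Integrable (fun z => (Real.sqrt δ * deriv fP y) * (z * fQ z)) :=
      hQ1.const_mul _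
    have hIc : Integrable
        (fun z => (Real.sqrt δ ^ 2 / 2 * iteratedDeriv 2 fP y) * (z ^ 2 * fQ z)) :=
      hQ2.const_mul _
    have hI1 : Integrable (fun z => fP (y - Real.sqrt δ * z) * fQ z - fP y * fQ z) :=
      hI0.sub hIa
    have hI2 : Integrable (fun z => (fP (y - Real.sqrt δ * z) * fQ z - fP y * fQ z) +
        (Real.sqrt δ * deriv fP y) * (z * fQ z)) := hI1.add hIb
    have hI3 : Integrable (fun z => ((fP (y - Real.sqrt δ * z) * fQ z - fP y * fQ z) +
        (Real.sqrt δ * deriv fP y) * (z * fQ z)) -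
        (Real.sqrt δ ^ 2 / 2 * iteratedDeriv 2 fP y) * (z ^ 2 * fQ z)) := hI2.sub hIc
    have hIR : Integrable (fun z =>
        (fP (y - Real.sqrt δ * z) - fP y + Real.sqrt δ * z * deriv fP y -
          (Real.sqrt δ * z) ^ 2 / 2 * iteratedDeriv 2 fP y) * fQ z) := by
      refine hI3.congr (Eventually.of_forall fun z => ?_)
      ring
    have hEq : (∫ z, (fP (y - Real.sqrt δ * z) - fP y + Real.sqrt δ * z * deriv fP y -
          (Real.sqrt δ * z) ^ 2 / 2 * iteratedDeriv 2 fP y) * fQ z) =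
        convPert fP fQ δ y - fP y - δ * ((1 / 2) * iteratedDeriv 2 fP y) := by
      have h1 : (fun z => (fP (y - Real.sqrt δ * z) - fP y + Real.sqrt δ * z * deriv fP y -
            (Real.sqrt δ * z) ^ 2 / 2 * iteratedDeriv 2 fP y) * fQ z) =
          fun z => (fP (y - Real.sqrt δ * z) * fQ z - fP y * fQ z +
            (Real.sqrt δ * deriv fP y) * (z * fQ z)) -
            (Real.sqrt δ ^ 2 / 2 * iteratedDeriv 2 fP y) * (z ^ 2 * fQ z) := by
        funext z; ring
      rw [h1, integral_sub hI2 hIc, integral_add hI1 hIb,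
        integral_sub hI0 hIa, integral_const_mul, integral_const_mul, integral_const_mul,
        hQdens, hQmean, hQvar, hs2]
      have hconv : (∫ z, fP (y - Real.sqrt δ * z) * fQ z) = convPert fP fQ δ y := rfl
      rw [hconv]
      ring
    rw [← hEq]
    calc |∫ z, (fP (y - Real.sqrt δ * z) - fP y + Real.sqrt δ * z * deriv fP y -
            (Real.sqrt δ * z) ^ 2 / 2 * iteratedDeriv 2 fP y) * fQ z|
        ≤ ∫ z, |(fP (y - Real.sqrt δ * z) - fP y + Real.sqrt δ * z * deriv fP y -
            (Real.sqrt δ * z) ^ 2 / 2 * iteratedDeriv 2 fP y) * fQ z| := by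
          exact norm_integral_le_integral_norm (μ := volume)
            (fun z => (fP (y - Real.sqrt δ * z) - fP y + Real.sqrt δ * z * deriv fP y -
              (Real.sqrt δ * z) ^ 2 / 2 * iteratedDeriv 2 fP y) * fQ z)
      _ ≤ ∫ z, (M * Real.sqrt δ ^ 3) * (|z| ^ 3 * fQ z) := by
          refine integral_mono hIR.abs (hQ3abs.const_mul _) fun z => ?_
          have htay := taylor_bd_aux fP hPsmooth M hM y (-(Real.sqrt δ * z))
          have hrw : y + -(Real.sqrt δ * z) = y - Real.sqrt δ * z := by ring
          rw [hrw] at htay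
          have htay' : |fP (y - Real.sqrt δ * z) - fP y + Real.sqrt δ * z * deriv fP y -
              (Real.sqrt δ * z) ^ 2 / 2 * iteratedDeriv 2 fP y| ≤
              M * |Real.sqrt δ * z| ^ 3 := by
            have he : fP (y - Real.sqrt δ * z) - fP y - (-(Real.sqrt δ * z)) * deriv fP y -
                (-(Real.sqrt δ * z)) ^ 2 / 2 * iteratedDeriv 2 fP y =
                fP (y - Real.sqrt δ * z) - fP y + Real.sqrt δ * z * deriv fP y -
                (Real.sqrt δ * z) ^ 2 / 2 * iteratedDeriv 2 fP y := by ring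
            rw [he, abs_neg] at htay
            exact htay
          have habs : |Real.sqrt δ * z| ^ 3 = Real.sqrt δ ^ 3 * |z| ^ 3 := by
            rw [abs_mul, mul_pow, abs_of_nonneg hs0]
          rw [habs] at htay'
          rw [abs_mul, abs_of_nonneg (hQpos z)]
          have := mul_le_mul_of_nonneg_right htay' (hQpos z)
          calc |fP (y - Real.sqrt δ * z) - fP y + Real.sqrt δ * z * deriv fP y -
                (Real.sqrt δ * z) ^ 2 / 2 * iteratedDeriv 2 fP y| * fQ z
              ≤ M * (Real.sqrt δ ^ 3 * |z| ^ 3) * fQ z := this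
            _ = M * Real.sqrt δ ^ 3 * (|z| ^ 3 * fQ z) := by ring
      _ = (M * Real.sqrt δ ^ 3) * C3 := integral_const_mul _ _
      _ = K * (δ * Real.sqrt δ) := by
          rw [hK, show Real.sqrt δ ^ 3 = Real.sqrt δ ^ 2 * Real.sqrt δ from by ring, hs2]
          ring
  -- value at 0
  have hf0 : convPert fP fQ 0 y = fP y := by
    have : convPert fP fQ 0 y = ∫ z, fP y * fQ z := by
      simp [convPert]
    rw [this, integral_const_mul, hQdens, mul_one]
  -- conclude via little-o characterization
  rw [hasDerivWithinAt_iff_isLittleO, Asymptotics.isLittleO_iff]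
  intro ε hε
  have hc : (0:ℝ) < ε / (K + 1) := by positivity
  filter_upwards [self_mem_nhdsWithin,
    ((eventually_lt_nhds (show (0:ℝ) < (ε / (K + 1)) ^ 2 by positivity)).filter_mono
      nhdsWithin_le_nhds)] with δ hδ hδc
  have hδ0 : (0:ℝ) ≤ δ := hδ
  have hsq : Real.sqrt δ ≤ ε / (K + 1) := by
    calc Real.sqrt δ ≤ Real.sqrt ((ε / (K + 1)) ^ 2) := Real.sqrt_le_sqrt hδc.le
      _ = ε / (K + 1) := Real.sqrt_sq hc.le
  have h1 := key δ hδ0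
  simp only [sub_zero, smul_eq_mul, Real.norm_eq_abs, hf0]
  calc |convPert fP fQ δ y - fP y - δ * ((1 / 2) * iteratedDeriv 2 fP y)|
      ≤ K * (δ * Real.sqrt δ) := h1
    _ ≤ ε * δ := by
        have hpos : (0:ℝ) < K + 1 := by linarith
        have h2 : K * Real.sqrt δ ≤ ε := by
          have h3 : K * Real.sqrt δ ≤ K * (ε / (K + 1)) :=
            mul_le_mul_of_nonneg_left hsq hK0
          have h4 : K * (ε / (K + 1)) ≤ ε := by
            rw [mul_comm, div_mul_eq_mul_div, div_le_iff₀ hpos]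
            nlinarith
          linarith
        calc K * (δ * Real.sqrt δ) = (K * Real.sqrt δ) * δ := by ring
          _ ≤ ε * δ := mul_le_mul_of_nonneg_right h2 hδ0
    _ = ε * |δ| := by rw [abs_of_nonneg hδ0]
end

section
/- Let f_P be a strictly positive probability mass function on ℤ with finite entropy and finite second moment. With f_{P'}^γ[n] = (1−2γ)f_P[n] + γ(f_P[n−1]+f_P[n+1]), one has lim_{γ→0⁺} (H(f_{P'}^γ) − H(f_P))/(E(f_{P'}^γ) − E(f_P)) = (m/h²)·[D(f_P(·+1) ‖ f_P) + D(f_P(·−1) ‖ f_P)], where E(f) = (1/2m)Σ_n (nh)² f[n] and D is the discrete KL divergence. -/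
open Filter Topology

/-- Shannon entropy (in nats) of a probability mass function on `ℤ`. -/
noncomputable def discEntropy (f : ℤ → ℝ) : ℝ := -∑' n : ℤ, f n * Real.log (f n)

/-- Kinetic energy of a PMF on `ℤ` for momentum spacing `h` and mass `m`. -/
noncomputable def discEnergy (m h : ℝ) (f : ℤ → ℝ) : ℝ :=
  (1 / (2 * m)) * ∑' n : ℤ, ((n : ℝ) * h) ^ 2 * f n

/-- Discrete Kullback–Leibler divergence on `ℤ`. -/
noncomputable def discKL (g f : ℤ → ℝ) : ℝ := ∑' n : ℤ, g n * Real.log (g n / f n)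

/-- Nearest-neighbor smoothing of a PMF on `ℤ` with parameter `γ`. -/
noncomputable def smoothPMF (f : ℤ → ℝ) (γ : ℝ) (n : ℤ) : ℝ :=
  (1 - 2 * γ) * f n + γ * (f (n - 1) + f (n + 1))

/-!
Write `f_γ = f + γ Δf`, where `Δf n = f (n - 1) + f (n + 1) - 2 f n` is the discrete Laplacian.
Summation by parts gives `∑ n² Δf n = 2`, so the energy grows exactly linearly:
`E(f_γ) - E(f) = γ h² / m`. For the entropy,
`(H(f_γ) - H(f)) / γ = -∑ (φ (f_γ n) - φ (f n)) / γ` with `φ x = x log x`. For `γ ≤ 1/4`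
both `f n` and `f_γ n` lie in `[f n / 2, 1]`, where `|φ'| ≤ 1 + log 2 + |log (f n)|`, so the
quotients are dominated by `(1 + log 2 + |log (f n)|) |Δf n|`, which is summable because the
entropy and both divergences are finite. Dominated convergence gives the limit
`-∑ Δf n (log (f n) + 1)`, which is `D(f(·+1) ‖ f) + D(f(·-1) ‖ f)` after shifting sums.
-/

open Real

lemma Summable.int_comp_add {F : ℤ → ℝ} (hF : Summable F) (c : ℤ) :
    Summable fun n => F (n + c) :=
  (Equiv.addRight c).summable_iff.2 hF

lemma tsum_int_comp_add (F : ℤ → ℝ) (c : ℤ) : ∑' n, F (n + c) = ∑' n, F n :=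
  (Equiv.addRight c).tsum_eq F

lemma Summable.int_comp_sub {F : ℤ → ℝ} (hF : Summable F) (c : ℤ) :
    Summable fun n => F (n - c) :=
  (Equiv.subRight c).summable_iff.2 hF

lemma tsum_int_comp_sub (F : ℤ → ℝ) (c : ℤ) : ∑' n, F (n - c) = ∑' n, F n :=
  (Equiv.subRight c).tsum_eq F

lemma abs_mul_log_sub_mul_log_le {a b : ℝ} (ha : 0 < a) (ha1 : a ≤ 1) (hb : a / 2 ≤ b)
    (hb1 : b ≤ 1) : |b * log b - a * log a| ≤ (1 + log 2 + |log a|) * |b - a| := by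
  have hpos : ∀ x ∈ Set.Icc (a / 2) 1, 0 < x := fun x hx => by linarith [hx.1]
  have hderiv : ∀ x ∈ Set.Icc (a / 2) 1,
      HasDerivWithinAt (fun x => x * log x) (log x + 1) (Set.Icc (a / 2) 1) x :=
    fun x hx => (hasDerivAt_mul_log (hpos x hx).ne').hasDerivWithinAt
  have hbound : ∀ x ∈ Set.Icc (a / 2) 1, ‖log x + 1‖ ≤ 1 + log 2 + |log a| := by
    intro x hx
    have hle : log x ≤ 0 := log_nonpos (hpos x hx).le hx.2
    have hge : log a - log 2 ≤ log x := by
      rw [← log_div ha.ne' two_ne_zero]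
      exact log_le_log (by positivity) hx.1
    rw [Real.norm_eq_abs, abs_le]
    constructor <;> linarith [neg_abs_le (log a), abs_nonneg (log a), log_nonneg one_le_two]
  exact (convex_Icc _ _).norm_image_sub_le_of_norm_hasDerivWithin_le hderiv hbound
    ⟨by linarith, ha1⟩ ⟨hb, hb1⟩

lemma hasSum_mul_log_of_summable_discKL {f g : ℤ → ℝ} (hf : ∀ n, f n ≠ 0)
    (hg : ∀ n, g n ≠ 0) (hgg : Summable fun n => g n * log (g n))
    (hKL : Summable fun n => g n * log (g n / f n)) :
    HasSum (fun n => g n * log (f n)) (∑' n, g n * log (g n) - discKL g f) :=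
  (hgg.hasSum.sub hKL.hasSum).congr_fun fun n => by rw [log_div (hg n) (hf n)]; ring

noncomputable def discLaplacian (f : ℤ → ℝ) (n : ℤ) : ℝ := f (n - 1) + f (n + 1) - 2 * f n

lemma smoothPMF_eq_add_mul_discLaplacian (f : ℤ → ℝ) (γ : ℝ) (n : ℤ) :
    smoothPMF f γ n = f n + γ * discLaplacian f n := by
  rw [smoothPMF, discLaplacian]; ring

lemma hasSum_discLaplacian {f : ℤ → ℝ} (hf : Summable f) : HasSum (discLaplacian f) 0 := by
  have hsub : HasSum (fun n => f (n - 1)) (∑' n, f n) := by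
    simpa only [tsum_int_comp_sub] using (hf.int_comp_sub 1).hasSum
  have hadd : HasSum (fun n => f (n + 1)) (∑' n, f n) := by
    simpa only [tsum_int_comp_add] using (hf.int_comp_add 1).hasSum
  have h := (hsub.add hadd).sub (hf.hasSum.mul_left 2)
  exact h.summable.hasSum_iff.2 (by rw [h.tsum_eq]; ring)

lemma hasSum_discLaplacian_mul_log {f : ℤ → ℝ} (hpos : ∀ n, 0 < f n)
    (hH : Summable fun n => f n * log (f n))
    (hKLp : Summable fun n : ℤ => f (n + 1) * log (f (n + 1) / f n))
    (hKLm : Summable fun n : ℤ => f (n - 1) * log (f (n - 1) / f n)) :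
    HasSum (fun n => discLaplacian f n * log (f n))
      (-(discKL (fun n => f (n + 1)) f + discKL (fun n => f (n - 1)) f)) := by
  have hne : ∀ n, f n ≠ 0 := fun n => (hpos n).ne'
  have hsub := hasSum_mul_log_of_summable_discKL hne (fun n => hne (n - 1)) (hH.int_comp_sub 1) hKLm
  have hadd := hasSum_mul_log_of_summable_discKL hne (fun n => hne (n + 1)) (hH.int_comp_add 1) hKLp
  rw [tsum_int_comp_sub (fun n => f n * log (f n))] at hsub
  rw [tsum_int_comp_add (fun n => f n * log (f n))] at hadd
  have h := (hsub.add hadd).sub (hH.hasSum.mul_left 2)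
  refine (h.summable.hasSum_iff.2 (by rw [h.tsum_eq]; ring)).congr_fun fun n => ?_
  rw [discLaplacian]; ring

section Energy

variable {f : ℤ → ℝ} (hf : Summable f) (hmom : Summable fun n : ℤ => (n : ℝ) ^ 2 * f n)
include hf hmom

lemma summable_int_mul_of_summable_sq_mul : Summable fun n : ℤ => (n : ℝ) * f n := by
  refine (hmom.abs.add hf.abs).of_norm_bounded fun n => ?_
  rw [Real.norm_eq_abs, abs_mul, abs_mul, abs_pow, ← add_one_mul]
  gcongr
  nlinarith [abs_nonneg (n : ℝ), sq_nonneg (|(n : ℝ)| - 1)]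

lemma hasSum_add_sq_mul (c : ℝ) :
    HasSum (fun n : ℤ => ((n : ℝ) + c) ^ 2 * f n)
      ((∑' n : ℤ, (n : ℝ) ^ 2 * f n) + 2 * c * (∑' n : ℤ, (n : ℝ) * f n)
        + c ^ 2 * ∑' n, f n) :=
  ((hmom.hasSum.add ((summable_int_mul_of_summable_sq_mul hf hmom).hasSum.mul_left (2 * c))).add
    (hf.hasSum.mul_left (c ^ 2))).congr_fun fun n => by ring

lemma hasSum_sq_mul_comp_add (c : ℤ) :
    HasSum (fun n : ℤ => (n : ℝ) ^ 2 * f (n + c))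
      ((∑' n : ℤ, (n : ℝ) ^ 2 * f n) - 2 * c * (∑' n : ℤ, (n : ℝ) * f n)
        + c ^ 2 * ∑' n, f n) := by
  have h := (Equiv.addRight c).hasSum_iff.2 (hasSum_add_sq_mul hf hmom (-c))
  refine (h.summable.hasSum_iff.2 (by rw [h.tsum_eq]; ring)).congr_fun fun n => ?_
  simp

lemma hasSum_sq_mul_discLaplacian :
    HasSum (fun n : ℤ => (n : ℝ) ^ 2 * discLaplacian f n) (2 * ∑' n, f n) := by
  have hsub := hasSum_sq_mul_comp_add hf hmom (-1)
  have h := (hsub.add (hasSum_sq_mul_comp_add hf hmom 1)).sub (hmom.hasSum.mul_left 2)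
  refine (h.summable.hasSum_iff.2 (by rw [h.tsum_eq]; push_cast; ring)).congr_fun fun n => ?_
  rw [discLaplacian, sub_eq_add_neg n]
  ring

lemma discEnergy_smoothPMF_sub (m h γ : ℝ) :
    discEnergy m h (smoothPMF f γ) - discEnergy m h f = γ * h ^ 2 / m * ∑' n, f n := by
  have hsmooth : ∀ n : ℤ, ((n : ℝ) * h) ^ 2 * smoothPMF f γ n
      = h ^ 2 * ((n : ℝ) ^ 2 * f n) + γ * h ^ 2 * ((n : ℝ) ^ 2 * discLaplacian f n) := by
    intro n; rw [smoothPMF_eq_add_mul_discLaplacian]; ring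
  have hrest : ∀ n : ℤ, ((n : ℝ) * h) ^ 2 * f n = h ^ 2 * ((n : ℝ) ^ 2 * f n) := fun n => by
    ring
  rw [discEnergy, discEnergy, tsum_congr hsmooth, tsum_congr hrest, tsum_mul_left,
    ((hmom.hasSum.mul_left _).add ((hasSum_sq_mul_discLaplacian hf hmom).mul_left _)).tsum_eq]
  ring

end Energy

lemma smoothPMF_zero (f : ℤ → ℝ) : smoothPMF f 0 = f := by
  ext n; simp [smoothPMF]

lemma half_le_smoothPMF {f : ℤ → ℝ} (hpos : ∀ n, 0 < f n) {γ : ℝ} (hγ0 : 0 ≤ γ)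
    (hγ : γ ≤ 1 / 4) (n : ℤ) : f n / 2 ≤ smoothPMF f γ n := by
  rw [smoothPMF]; nlinarith [hpos n, hpos (n - 1), hpos (n + 1)]

lemma smoothPMF_le_one {f : ℤ → ℝ} (hle : ∀ n, f n ≤ 1) {γ : ℝ} (hγ0 : 0 ≤ γ)
    (hγ : γ ≤ 1 / 2) (n : ℤ) : smoothPMF f γ n ≤ 1 := by
  rw [smoothPMF]; nlinarith [hle n, hle (n - 1), hle (n + 1)]

noncomputable def mulLogSlope (f : ℤ → ℝ) (γ : ℝ) (n : ℤ) : ℝ :=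
  (smoothPMF f γ n * log (smoothPMF f γ n) - f n * log (f n)) / γ

lemma discEntropy_smoothPMF_sub {f : ℤ → ℝ} (hH : Summable fun n => f n * log (f n))
    {γ : ℝ} (hγ : γ ≠ 0) (hslope : Summable (mulLogSlope f γ)) :
    discEntropy (smoothPMF f γ) - discEntropy f = -(γ * ∑' n, mulLogSlope f γ n) := by
  have hsplit : ∀ n, smoothPMF f γ n * log (smoothPMF f γ n)
      = f n * log (f n) + γ * mulLogSlope f γ n := fun n => by
    rw [mulLogSlope, mul_div_cancel₀ _ hγ]; ring
  rw [discEntropy, discEntropy, tsum_congr hsplit,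
    (hH.hasSum.add (hslope.hasSum.mul_left γ)).tsum_eq]
  ring

section Entropy

variable {f : ℤ → ℝ} (hpos : ∀ n, 0 < f n)
include hpos

lemma abs_mulLogSlope_le (hle : ∀ n, f n ≤ 1) {γ : ℝ} (hγ0 : 0 < γ) (hγ : γ ≤ 1 / 4)
    (n : ℤ) :
    |mulLogSlope f γ n| ≤ (1 + log 2 + |log (f n)|) * |discLaplacian f n| := by
  have h := abs_mul_log_sub_mul_log_le (hpos n) (hle n) (half_le_smoothPMF hpos hγ0.le hγ n)
    (smoothPMF_le_one hle hγ0.le (by linarith) n)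
  rw [smoothPMF_eq_add_mul_discLaplacian, add_sub_cancel_left, abs_mul, abs_of_pos hγ0] at h
  rw [mulLogSlope, abs_div, abs_of_pos hγ0, div_le_iff₀ hγ0, smoothPMF_eq_add_mul_discLaplacian]
  linarith

lemma tendsto_mulLogSlope (n : ℤ) :
    Tendsto (fun γ => mulLogSlope f γ n) (𝓝[≠] 0)
      (𝓝 (discLaplacian f n * (log (f n) + 1))) := by
  have hlin : HasDerivAt (fun γ => smoothPMF f γ n) (discLaplacian f n) 0 := by
    simp only [smoothPMF_eq_add_mul_discLaplacian]
    simpa using (hasDerivAt_mul_const (discLaplacian f n)).const_add (f n)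
  have hderiv := (hasDerivAt_mul_log (by simpa [smoothPMF_zero] using (hpos n).ne')).comp 0 hlin
  rw [smoothPMF_zero, mul_comm] at hderiv
  refine (hasDerivAt_iff_tendsto_slope.1 hderiv).congr fun γ => ?_
  simp [slope_def_field, mulLogSlope, smoothPMF_zero]

lemma tendsto_tsum_mulLogSlope (hle : ∀ n, f n ≤ 1)
    (hdom : Summable fun n => (1 + log 2 + |log (f n)|) * |discLaplacian f n|) :
    Tendsto (fun γ => ∑' n, mulLogSlope f γ n) (𝓝[>] 0)
      (𝓝 (∑' n, discLaplacian f n * (log (f n) + 1))) := by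
  refine tendsto_tsum_of_dominated_convergence hdom
    (fun n => (tendsto_mulLogSlope hpos n).mono_left (nhdsWithin_mono _ fun _ hx => ne_of_gt hx)) ?_
  filter_upwards [Ioc_mem_nhdsGT (by norm_num : (0 : ℝ) < 1 / 4)] with γ hγ n
    using abs_mulLogSlope_le hpos hle hγ.1 hγ.2 n

end Entropy

theorem stmt17_general (f : ℤ → ℝ) (m h : ℝ)
    (hpos : ∀ n, 0 < f n) (hsum : ∑' n : ℤ, f n = 1)
    (hH : Summable (fun n : ℤ => f n * Real.log (f n)))
    (hmom : Summable (fun n : ℤ => (n : ℝ) ^ 2 * f n))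
    (hKLp : Summable (fun n : ℤ => f (n + 1) * Real.log (f (n + 1) / f n)))
    (hKLm : Summable (fun n : ℤ => f (n - 1) * Real.log (f (n - 1) / f n))) :
    Tendsto
      (fun γ : ℝ =>
        (discEntropy (smoothPMF f γ) - discEntropy f) /
          (discEnergy m h (smoothPMF f γ) - discEnergy m h f))
      (𝓝[>] 0)
      (𝓝 ((m / h ^ 2) *
        (discKL (fun n => f (n + 1)) f + discKL (fun n => f (n - 1)) f))) := by
  have hf : Summable f := by
    by_contra hf
    simp [tsum_eq_zero_of_not_summable hf] at hsum
  have hle : ∀ n, f n ≤ 1 := fun n => hsum ▸ hf.le_tsum n fun k _ => (hpos k).le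
  have hlap := hasSum_discLaplacian hf
  have hlog := hasSum_discLaplacian_mul_log hpos hH hKLp hKLm
  have hdom : Summable fun n => (1 + log 2 + |log (f n)|) * |discLaplacian f n| :=
    ((hlap.summable.abs.mul_left (1 + log 2)).add hlog.summable.abs).congr fun n => by
      rw [abs_mul]; ring
  have hvalue : HasSum (fun n => discLaplacian f n * (log (f n) + 1))
      (-(discKL (fun n => f (n + 1)) f + discKL (fun n => f (n - 1)) f)) := by
    simpa only [mul_add_one, add_zero] using hlog.add hlap
  have hlim := (tendsto_tsum_mulLogSlope hpos hle hdom).const_mul (-(m / h ^ 2))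
  rw [hvalue.tsum_eq, neg_mul_neg] at hlim
  refine hlim.congr' ?_
  filter_upwards [Ioc_mem_nhdsGT (by norm_num : (0 : ℝ) < 1 / 4)] with γ hγ
  rw [discEntropy_smoothPMF_sub hH hγ.1.ne'
      (hdom.of_norm_bounded (abs_mulLogSlope_le hpos hle hγ.1 hγ.2)),
    discEnergy_smoothPMF_sub hf hmom, hsum]
  field_simp
  rw [mul_div_mul_right _ _ hγ.1.ne']

theorem stmt17 (f : ℤ → ℝ) (m h : ℝ) (hm : 0 < m) (hh : 0 < h)
    (hpos : ∀ n, 0 < f n) (hsum : ∑' n : ℤ, f n = 1)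
    (hH : Summable (fun n : ℤ => f n * Real.log (f n)))
    (hmom : Summable (fun n : ℤ => (n : ℝ) ^ 2 * f n))
    (hKLp : Summable (fun n : ℤ => f (n + 1) * Real.log (f (n + 1) / f n)))
    (hKLm : Summable (fun n : ℤ => f (n - 1) * Real.log (f (n - 1) / f n))) :
    Tendsto
      (fun γ : ℝ =>
        (discEntropy (smoothPMF f γ) - discEntropy f) /
          (discEnergy m h (smoothPMF f γ) - discEnergy m h f))
      (𝓝[>] 0)
      (𝓝 ((m / h ^ 2) *
        (discKL (fun n => f (n + 1)) f + discKL (fun n => f (n - 1)) f))) :=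
  stmt17_general f m h hpos hsum hH hmom hKLp hKLm
end
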